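/- (Faà di Bruno's formula in Bell polynomial form.) Let m ≥ 1 be an integer and let f, g : ℝ → ℝ be m-times continuously differentiable. Then for every x ∈ ℝ, the m-th derivative of the composition satisfies dᵐ/dxᵐ f(g(x)) = Σ_{k=0}^{m} f^{(k)}(g(x)) · B_{m,k}( g'(x), g''(x), ..., g^{(m−k+1)}(x) ). -/

import Mathlib

/-- The partial Bell polynomial `B_{m,k}(x₁, …, x_{m-k+1})`: the sum over all tuples of
non-negative integers `(j₁, …, j_{m-k+1})` with `j₁ + ⋯ + j_{m-k+1} = k` and
`j₁ + 2 j₂ + ⋯ + (m-k+1) j_{m-k+1} = m` of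
`(m! / (j₁! ⋯ j_{m-k+1}!)) ∏_{i=1}^{m-k+1} (x_i / i!)^{j_i}`.
The arguments are given as a function `x : ℕ → ℝ` where `x i` is the `i`-th argument;
since every admissible `jᵢ` satisfies `jᵢ ≤ m`, the tuples are indexed by
`Fin (m-k+1) → Fin (m+1)` without loss of generality. -/
noncomputable def bellPoly (m k : ℕ) (x : ℕ → ℝ) : ℝ :=
  ∑ j ∈ Finset.univ.filter
      (fun j : Fin (m - k + 1) → Fin (m + 1) =>
        (∑ i : Fin (m - k + 1), (j i : ℕ)) = k ∧ (∑ i : Fin (m - k + 1), ((i : ℕ) + 1) * (j i : ℕ)) = m),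
    ((m.factorial : ℝ) / ∏ i : Fin (m - k + 1), ((j i : ℕ).factorial : ℝ)) *
      ∏ i : Fin (m - k + 1), (x ((i : ℕ) + 1) / (Nat.factorial ((i : ℕ) + 1) : ℝ)) ^ ((j i : ℕ))

/-!
Mathlib's Faà di Bruno formula writes the `m`-th derivative of `f ∘ g` as a sum over the ordered
finpartitions `c` of `Fin m` of `f^(#blocks)(g x) * ∏ g^(block size)(x)`, a summand that depends on
`c` only through its multiset `μ` of block sizes. Deleting the element `0` from its block shows that
the number of such partitions with block sizes `μ` satisfies a recurrence in `m` that
`m! / ∏ₛ (s! ^ μₛ * μₛ!)` (with `μₛ` the multiplicity of `s`) satisfies as well, so the two agree.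
Recording `μ` by its vector of multiplicities `(μ₁, μ₂, …)` then turns the sum into the Bell
polynomials.
-/

open Finset Nat

namespace Multiset

theorem map_univ_update {ι α : Type*} [Fintype ι] [DecidableEq ι] [DecidableEq α]
    (f : ι → α) (k : ι) (a : α) :
    univ.val.map (Function.update f k a) = a ::ₘ (univ.val.map f).erase (f k) := by
  have hk : univ.val = k ::ₘ univ.val.erase k := (cons_erase (mem_univ_val k)).symm
  rw [hk, map_cons, map_cons, Function.update_self, erase_cons_head]
  congr 1
  refine map_congr rfl fun i hi => Function.update_of_ne ?_ _ _
  exact (univ.nodup.mem_erase_iff.mp hi).1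

section cons

variable {α : Type*} [DecidableEq α]

theorem cons_eq_iff_mem_and_eq_erase {a : α} {ν μ : Multiset α} :
    a ::ₘ ν = μ ↔ a ∈ μ ∧ ν = μ.erase a := by
  constructor
  · rintro rfl
    exact ⟨mem_cons_self a ν, (erase_cons_head a ν).symm⟩
  · rintro ⟨ha, rfl⟩
    exact cons_erase ha

theorem cons_erase_eq_iff {a b : α} {ν μ : Multiset α} (ha : a ∈ ν) :
    b ::ₘ ν.erase a = μ ↔ b ∈ μ ∧ ν = a ::ₘ μ.erase b := by
  rw [cons_eq_iff_mem_and_eq_erase]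
  exact and_congr_right fun _ =>
    ⟨fun h => by rw [← h, cons_erase ha], fun h => by rw [h, erase_cons_head]⟩

end cons

lemma sum_eq_count_one_add (μ : Multiset ℕ) :
    μ.sum = μ.count 1 + ∑ t ∈ μ.toFinset with 2 ≤ t, t * μ.count t := by
  rw [sum_multiset_count, ← sum_filter_not_add_sum_filter _ (2 ≤ ·)]
  congr 1
  · refine (sum_eq_single 1 (fun b hb hb1 => ?_) fun h1 => ?_).trans (by simp)
    · obtain rfl : b = 0 := by have := (mem_filter.mp hb).2; omega
      simp
    · have h1μ : 1 ∉ μ := fun h => h1 (by simp [h])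
      simp [count_eq_zero.mpr h1μ]
  · simp_rw [smul_eq_mul, mul_comm]

/-- The order of the stabiliser in `Equiv.Perm (Fin μ.sum)` of a set partition with block
sizes `μ`. -/
def stabilizerCard (μ : Multiset ℕ) : ℕ :=
  ∏ s ∈ μ.toFinset, s ! ^ μ.count s * (μ.count s)!

lemma stabilizerCard_eq_prod_of_subset {μ : Multiset ℕ} {S : Finset ℕ} (h : μ.toFinset ⊆ S) :
    μ.stabilizerCard = ∏ s ∈ S, s ! ^ μ.count s * (μ.count s)! :=
  prod_subset h fun s _ hs => by simp [count_eq_zero.mpr (by simpa using hs)]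

lemma stabilizerCard_pos (μ : Multiset ℕ) : 0 < μ.stabilizerCard :=
  Finset.prod_pos fun _ _ => Nat.mul_pos (pow_pos (factorial_pos _) _) (factorial_pos _)

lemma stabilizerCard_cons (a : ℕ) (μ : Multiset ℕ) :
    (a ::ₘ μ).stabilizerCard = a ! * (μ.count a + 1) * μ.stabilizerCard := by
  have ha : a ∈ insert a μ.toFinset := mem_insert_self a _
  rw [stabilizerCard_eq_prod_of_subset (S := insert a μ.toFinset) (by simp [toFinset_cons]),
    stabilizerCard_eq_prod_of_subset (subset_insert a _), ← mul_prod_erase _ _ ha,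
    ← mul_prod_erase _ _ ha, count_cons_self, pow_succ, factorial_succ,
    prod_congr rfl fun s hs => by rw [count_cons_of_ne (ne_of_mem_erase hs)]]
  ring

section ofMultiplicities

variable {L : ℕ} (j : Fin L → ℕ)

def ofMultiplicities : Multiset ℕ := ∑ i, replicate (j i) ((i : ℕ) + 1)

lemma card_ofMultiplicities : card (ofMultiplicities j) = ∑ i, j i := by
  simp [ofMultiplicities]

lemma sum_ofMultiplicities : (ofMultiplicities j).sum = ∑ i : Fin L, ((i : ℕ) + 1) * j i := by
  simp [ofMultiplicities, Multiset.sum_sum, mul_comm]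

lemma pos_of_mem_ofMultiplicities {s : ℕ} (hs : s ∈ ofMultiplicities j) : 0 < s := by
  obtain ⟨i, -, hi⟩ := mem_sum.mp hs
  rw [eq_of_mem_replicate hi]
  exact succ_pos i

lemma count_ofMultiplicities (i : Fin L) : (ofMultiplicities j).count ((i : ℕ) + 1) = j i := by
  rw [ofMultiplicities, count_sum', sum_eq_single i (fun b _ hb => ?_) (by simp)]
  · simp
  · simp [count_replicate, Fin.val_eq_val, hb]

lemma prod_map_ofMultiplicities {M : Type*} [CommMonoid M] (G : ℕ → M) :
    ((ofMultiplicities j).map G).prod = ∏ i : Fin L, G ((i : ℕ) + 1) ^ j i := by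
  rw [ofMultiplicities, ← coe_mapAddMonoidHom, map_sum, Multiset.prod_sum]
  simp

lemma stabilizerCard_ofMultiplicities :
    (ofMultiplicities j).stabilizerCard = ∏ i : Fin L, ((i : ℕ) + 1)! ^ j i * (j i)! := by
  have hsub : (ofMultiplicities j).toFinset ⊆ univ.image fun i : Fin L => (i : ℕ) + 1 := by
    intro s hs
    obtain ⟨i, -, hi⟩ := mem_sum.mp (mem_toFinset.mp hs)
    exact mem_image.mpr ⟨i, mem_univ i, (eq_of_mem_replicate hi).symm⟩
  rw [stabilizerCard_eq_prod_of_subset hsub, prod_image fun a _ b _ h => Fin.ext (by omega)]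
  simp_rw [count_ofMultiplicities]

lemma ofMultiplicities_count {μ : Multiset ℕ} (h : ∀ s ∈ μ, 0 < s ∧ s ≤ L) :
    ofMultiplicities (fun i : Fin L => μ.count ((i : ℕ) + 1)) = μ := by
  ext a
  have hterm (i : Fin L) : count a (replicate (μ.count ((i : ℕ) + 1)) ((i : ℕ) + 1)) =
      if (i : ℕ) + 1 = a then μ.count a else 0 := by
    rw [count_replicate]
    split_ifs with hi <;> simp [hi]
  rw [ofMultiplicities, count_sum', sum_congr rfl fun i _ => hterm i]
  by_cases ha : a ∈ μ
  · obtain ⟨ha0, haL⟩ := h a ha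
    rw [sum_eq_single ⟨a - 1, by omega⟩ (fun i _ hi => if_neg fun hia => hi (Fin.ext ?_))
      (by simp), if_pos (by simp; omega)]
    simp only
    omega
  · simp [count_eq_zero.mpr ha]

end ofMultiplicities

end Multiset

namespace Nat.Partition

variable {m : ℕ} (P : Nat.Partition m)

lemma card_parts_le : Multiset.card P.parts ≤ m := by
  simpa [P.parts_sum] using Multiset.card_nsmul_le_sum (a := 1) fun _ hs => P.parts_pos hs

lemma add_card_parts_le {s : ℕ} (hs : s ∈ P.parts) : s + Multiset.card P.parts ≤ m + 1 := by
  have hsum := Multiset.sum_erase hs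
  have hcard := Multiset.card_erase_add_one hs
  have hle := Multiset.card_nsmul_le_sum (s := P.parts.erase s) (a := 1)
    fun _ ht => P.parts_pos (Multiset.mem_of_mem_erase ht)
  rw [P.parts_sum] at hsum
  rw [smul_eq_mul, mul_one] at hle
  omega

end Nat.Partition

namespace OrderedFinpartition

section partSizes

variable {n : ℕ} (c : OrderedFinpartition n)

def partSizes : Multiset ℕ := univ.val.map c.partSize

@[simp] lemma card_partSizes : Multiset.card c.partSizes = c.length := by
  simp [partSizes]

lemma sum_partSizes : c.partSizes.sum = n := by
  change ∑ i, c.partSize i = n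
  simpa using Fintype.card_congr c.equivSigma

lemma pos_of_mem_partSizes {s : ℕ} (hs : s ∈ c.partSizes) : 0 < s := by
  obtain ⟨i, -, rfl⟩ := Multiset.mem_map.mp hs
  exact c.partSize_pos i

lemma count_partSizes (s : ℕ) : c.partSizes.count s = #{k | c.partSize k = s} := by
  rw [partSizes, Multiset.count_map, ← filter_val, ← card_def]
  simp_rw [eq_comm (a := s)]

lemma prod_map_partSizes {M : Type*} [CommMonoid M] (G : ℕ → M) :
    (c.partSizes.map G).prod = ∏ i, G (c.partSize i) := by
  rw [partSizes, Multiset.map_map]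
  rfl

lemma partSizes_extendLeft : c.extendLeft.partSizes = 1 ::ₘ c.partSizes := by
  change univ.val.map (Fin.cons 1 c.partSize) = _
  rw [Fin.univ_succ, cons_val, Multiset.map_cons, map_val, Multiset.map_map]
  rfl

lemma partSizes_extendMiddle (k : Fin c.length) :
    (c.extendMiddle k).partSizes = (c.partSize k + 1) ::ₘ c.partSizes.erase (c.partSize k) := by
  change univ.val.map (Function.update c.partSize k (c.partSize k + 1)) = _
  rw [Multiset.map_univ_update]
  rfl

def toPartition : Nat.Partition n where
  parts := c.partSizes
  parts_pos := c.pos_of_mem_partSizes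
  parts_sum := c.sum_partSizes

lemma card_filter_extendMiddle_partSizes_eq (μ : Multiset ℕ) :
    #{k | (c.extendMiddle k).partSizes = μ} =
      ∑ t ∈ μ.toFinset with 2 ≤ t,
        if c.partSizes = (t - 1) ::ₘ μ.erase t then c.partSizes.count (t - 1) else 0 := by
  have hmem (k : Fin c.length) : c.partSize k ∈ c.partSizes :=
    Multiset.mem_map_of_mem _ (mem_univ_val k)
  simp_rw [partSizes_extendMiddle, Multiset.cons_erase_eq_iff (hmem _)]
  rw [card_eq_sum_card_fiberwise (f := fun k => c.partSize k + 1) (t := μ.toFinset)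
    (fun k hk => Multiset.mem_toFinset.mpr (mem_filter.mp hk).2.1), sum_filter]
  refine sum_congr rfl fun t htμ => ?_
  rw [filter_filter]
  split_ifs with ht hν
  · rw [count_partSizes]
    refine congrArg card (filter_congr fun k _ => ⟨by omega, fun hk => ?_⟩)
    have htk : c.partSize k + 1 = t := by omega
    rw [htk, hk]
    exact ⟨⟨Multiset.mem_toFinset.mp htμ, hν⟩, rfl⟩
  · refine card_eq_zero.mpr (filter_eq_empty_iff.mpr ?_)
    rintro k - ⟨⟨-, h⟩, rfl⟩
    exact hν (by simpa using h)
  · refine card_eq_zero.mpr (filter_eq_empty_iff.mpr ?_)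
    rintro k - ⟨-, rfl⟩
    have := c.partSize_pos k
    omega

end partSizes

noncomputable def countWithPartSizes (n : ℕ) (μ : Multiset ℕ) : ℕ :=
  #{c : OrderedFinpartition n | c.partSizes = μ}

lemma countWithPartSizes_zero : countWithPartSizes 0 0 = 1 := by
  rw [countWithPartSizes,
    filter_true_of_mem fun c _ => Multiset.card_eq_zero.mp (by simpa using c.length_le)]
  simp

/-- Every partition of `Fin (n + 1)` arises from one of `Fin n` by adding `0` either as a new
singleton block or to an existing block, which then grows from size `t - 1` to `t`. -/
lemma countWithPartSizes_succ (n : ℕ) (μ : Multiset ℕ) :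
    countWithPartSizes (n + 1) μ =
      (if 1 ∈ μ then countWithPartSizes n (μ.erase 1) else 0) +
        ∑ t ∈ μ.toFinset with 2 ≤ t,
          countWithPartSizes n ((t - 1) ::ₘ μ.erase t) * ((t - 1) ::ₘ μ.erase t).count (t - 1) := by
  have hsplit : countWithPartSizes (n + 1) μ = ∑ c : OrderedFinpartition n,
      ((if c.extendLeft.partSizes = μ then 1 else 0) +
        #{k | (c.extendMiddle k).partSizes = μ}) := by
    rw [countWithPartSizes, card_filter, ← (extendEquiv n).sum_comp, ← univ_sigma_univ, sum_sigma]
    refine sum_congr rfl fun c _ => ?_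
    rw [Fintype.sum_option, card_filter]
    rfl
  rw [hsplit, sum_add_distrib]
  congr 1
  · simp_rw [partSizes_extendLeft, Multiset.cons_eq_iff_mem_and_eq_erase]
    split_ifs with h1
    · simp only [h1, true_and]
      rw [countWithPartSizes, card_filter]
    · simp [h1]
  · simp_rw [card_filter_extendMiddle_partSizes_eq]
    rw [sum_comm]
    refine sum_congr rfl fun t _ => ?_
    rw [← sum_filter, sum_congr rfl fun c hc => by rw [(mem_filter.mp hc).2], sum_const,
      smul_eq_mul, countWithPartSizes]

open Multiset in
theorem countWithPartSizes_mul_stabilizerCard {n : ℕ} {μ : Multiset ℕ} (hpos : ∀ s ∈ μ, 0 < s)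
    (hsum : μ.sum = n) : countWithPartSizes n μ * μ.stabilizerCard = n ! := by
  induction n generalizing μ with
  | zero =>
    obtain rfl : μ = 0 := eq_zero_of_forall_notMem fun s hs =>
      (hpos s hs).ne' (sum_eq_zero_iff.mp hsum s hs)
    simp [countWithPartSizes_zero, stabilizerCard]
  | succ n ih =>
    have h_one : (if 1 ∈ μ then countWithPartSizes n (μ.erase 1) else 0) * μ.stabilizerCard =
        μ.count 1 * n ! := by
      split_ifs with h1
      · have hsum' : (μ.erase 1).sum = n := by
          have := Multiset.sum_erase h1
          omega
        rw [← ih (fun s hs => hpos s (mem_of_mem_erase hs)) hsum', ← cons_erase h1,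
          stabilizerCard_cons, count_cons_self, erase_cons_head]
        ring
      · simp [count_eq_zero.mpr h1]
    have h_grow : ∀ t ∈ {t ∈ μ.toFinset | 2 ≤ t},
        countWithPartSizes n ((t - 1) ::ₘ μ.erase t) * ((t - 1) ::ₘ μ.erase t).count (t - 1) *
          μ.stabilizerCard = t * μ.count t * n ! := by
      intro t ht
      obtain ⟨htμ, ht2⟩ : t ∈ μ ∧ 2 ≤ t := by simpa using ht
      have hsum' : ((t - 1) ::ₘ μ.erase t).sum = n := by
        have := Multiset.sum_erase htμ
        rw [Multiset.sum_cons]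
        omega
      have hpos' : ∀ s ∈ (t - 1) ::ₘ μ.erase t, 0 < s := by
        simp only [Multiset.mem_cons, forall_eq_or_imp]
        exact ⟨by omega, fun s hs => hpos s (mem_of_mem_erase hs)⟩
      have hstab : μ.stabilizerCard =
          t ! * ((μ.erase t).count t + 1) * (μ.erase t).stabilizerCard := by
        rw [← stabilizerCard_cons, cons_erase htμ]
      have hcount : μ.count t = (μ.erase t).count t + 1 := by
        conv_lhs => rw [← cons_erase htμ, count_cons_self]
      rw [← ih hpos' hsum', stabilizerCard_cons, count_cons_self, hstab, hcount,
        ← Nat.mul_factorial_pred (by omega : t ≠ 0)]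
      ring
    rw [countWithPartSizes_succ, add_mul, sum_mul, h_one, sum_congr rfl h_grow, ← sum_mul,
      ← add_mul, ← sum_eq_count_one_add, hsum, factorial_succ]

theorem sum_comp_partSizes_eq_sum_partition {M : Type*} [AddCommMonoid M] (m : ℕ)
    (Φ : Multiset ℕ → M) :
    ∑ c : OrderedFinpartition m, Φ c.partSizes =
      ∑ P : Nat.Partition m, countWithPartSizes m P.parts • Φ P.parts := by
  rw [← sum_fiberwise univ toPartition]
  refine sum_congr rfl fun P _ => ?_
  simp_rw [Nat.Partition.ext_iff, toPartition]
  rw [sum_congr rfl fun c hc => by rw [(mem_filter.mp hc).2], sum_const, countWithPartSizes]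
  congr 2

end OrderedFinpartition

open OrderedFinpartition

theorem bellPoly_eq_sum_partition (m k : ℕ) (x : ℕ → ℝ) :
    bellPoly m k x = ∑ P : Nat.Partition m with Multiset.card P.parts = k,
      (m ! / P.parts.stabilizerCard : ℝ) * (P.parts.map x).prod := by
  have hrec (P : Nat.Partition m) (hP : Multiset.card P.parts = k) :
      Multiset.ofMultiplicities (fun i : Fin (m - k + 1) => P.parts.count ((i : ℕ) + 1)) =
        P.parts :=
    Multiset.ofMultiplicities_count fun s hs =>
      ⟨P.parts_pos hs, by have := P.add_card_parts_le hs; omega⟩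
  rw [bellPoly]
  refine sum_bij' (fun j hj => ⟨Multiset.ofMultiplicities (fun i => (j i : ℕ)),
      Multiset.pos_of_mem_ofMultiplicities _,
      by rw [Multiset.sum_ofMultiplicities]; exact (mem_filter.mp hj).2.2⟩)
    (fun P _ i => ⟨P.parts.count ((i : ℕ) + 1),
      lt_succ_of_le ((Multiset.count_le_card _ _).trans P.card_parts_le)⟩) ?_ ?_ ?_ ?_ ?_
  · intro j hj
    simpa [Multiset.card_ofMultiplicities] using (mem_filter.mp hj).2.1
  · intro P hP
    have hP := (mem_filter.mp hP).2
    simp only [mem_filter, mem_univ, true_and]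
    rw [← Multiset.card_ofMultiplicities, ← Multiset.sum_ofMultiplicities, hrec P hP]
    exact ⟨hP, P.parts_sum⟩
  · intro j _
    funext i
    exact Fin.ext (Multiset.count_ofMultiplicities _ i)
  · intro P hP
    exact Nat.Partition.ext (hrec P (mem_filter.mp hP).2)
  · intro j _
    rw [Multiset.stabilizerCard_ofMultiplicities, Multiset.prod_map_ofMultiplicities]
    push_cast
    simp_rw [div_pow, prod_div_distrib, prod_mul_distrib]
    field_simp

theorem sum_orderedFinpartition_eq_sum_bellPoly (m : ℕ) (F G : ℕ → ℝ) :
    ∑ c : OrderedFinpartition m, F c.length * ∏ i, G (c.partSize i) =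
      ∑ k ∈ range (m + 1), F k * bellPoly m k G := by
  have hcount (P : Nat.Partition m) :
      (countWithPartSizes m P.parts : ℝ) = m ! / P.parts.stabilizerCard := by
    rw [eq_div_iff (cast_ne_zero.mpr (Multiset.stabilizerCard_pos _).ne'), ← cast_mul,
      countWithPartSizes_mul_stabilizerCard (fun _ hs => P.parts_pos hs) P.parts_sum]
  calc ∑ c : OrderedFinpartition m, F c.length * ∏ i, G (c.partSize i)
      = ∑ c : OrderedFinpartition m, F (Multiset.card c.partSizes) * (c.partSizes.map G).prod := by
        simp only [card_partSizes, prod_map_partSizes]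
    _ = ∑ P : Nat.Partition m,
          countWithPartSizes m P.parts • (F (Multiset.card P.parts) * (P.parts.map G).prod) :=
        sum_comp_partSizes_eq_sum_partition m fun μ => F (Multiset.card μ) * (μ.map G).prod
    _ = ∑ k ∈ range (m + 1), ∑ P : Nat.Partition m with Multiset.card P.parts = k,
          countWithPartSizes m P.parts • (F (Multiset.card P.parts) * (P.parts.map G).prod) :=
        (sum_fiberwise_of_maps_to (g := fun P : Nat.Partition m => Multiset.card P.parts)
          (fun P _ => mem_range.mpr (lt_succ_of_le P.card_parts_le)) _).symm
    _ = ∑ k ∈ range (m + 1), F k * bellPoly m k G := by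
        simp_rw [bellPoly_eq_sum_partition, mul_sum]
        refine sum_congr rfl fun k _ => sum_congr rfl fun P hP => ?_
        rw [nsmul_eq_mul, hcount, (mem_filter.mp hP).2]
        ring

theorem faa_di_bruno_bell_general (m : ℕ) (f g : ℝ → ℝ)
    (hf : ContDiff ℝ m f) (hg : ContDiff ℝ m g) (x : ℝ) :
    iteratedDeriv m (fun t => f (g t)) x =
      ∑ k ∈ Finset.range (m + 1),
        iteratedDeriv k f (g x) * bellPoly m k (fun i => iteratedDeriv i g x) := by
  rw [← sum_orderedFinpartition_eq_sum_bellPoly]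
  exact iteratedDeriv_comp_eq_sum_orderedFinpartition hf.contDiffAt hg.contDiffAt le_rfl

/-- **Faà di Bruno's formula in Bell polynomial form.**
If `f, g : ℝ → ℝ` are `m`-times continuously differentiable (`m ≥ 1`), then for all `x`,
`dᵐ/dxᵐ f(g(x)) = ∑_{k=0}^{m} f^{(k)}(g(x)) ⬝ B_{m,k}(g'(x), g''(x), …, g^{(m-k+1)}(x))`. -/
theorem faa_di_bruno_bell (m : ℕ) (hm : 1 ≤ m) (f g : ℝ → ℝ)
    (hf : ContDiff ℝ m f) (hg : ContDiff ℝ m g) (x : ℝ) :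
    iteratedDeriv m (fun t => f (g t)) x =
      ∑ k ∈ Finset.range (m + 1),
        iteratedDeriv k f (g x) * bellPoly m k (fun i => iteratedDeriv i g x) :=
  faa_di_bruno_bell_general m f g hf hg x
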